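/- Let n ≥ 1, ℓ ∈ ℝⁿ, λ, γ > 0, and suppose ℓⱼ ≤ nλ − √n·γ for all j. Then w = (1,1,…,1) is a global minimizer of F(w) = (1/n)Σⱼ wⱼℓⱼ − λΣⱼ wⱼ + (γ/√n)‖w‖₂ over [0,1]ⁿ. -/

import Mathlib

/-!
Write the objective as `∑ wⱼ aⱼ + c ‖w‖₂` with `aⱼ = ℓⱼ/n − λ` and `c = γ/√n`; the easiness
assumption says exactly `aⱼ ≤ −c`. Lowering the weights from `1` to `w` therefore gains at least
`c (n − ∑ wⱼ)` in the linear part, while by Cauchy–Schwarz (`√n ‖w‖₂ ≥ ∑ wⱼ`) the norm term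
drops by at most `c (√n − ∑ wⱼ/√n)`, which is smaller because `√n ≥ 1` and `∑ wⱼ ≤ n`.
-/

open Finset Real

section
variable {ι : Type*} [Fintype ι]

theorem sum_le_sqrt_card_mul_sqrt_sum_sq (w : ι → ℝ) :
    ∑ i, w i ≤ √(Fintype.card ι) * √(∑ i, w i ^ 2) := by
  rw [← sqrt_mul (Nat.cast_nonneg _)]
  exact le_sqrt_of_sq_le (sq_sum_le_card_mul_sum_sq (s := univ))

theorem sum_sub_sqrt_sum_sq_le {w : ι → ℝ} (hw : w ∈ Set.Icc 0 1) :
    ∑ i, w i - √(∑ i, w i ^ 2) ≤ Fintype.card ι - √(Fintype.card ι) := by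
  cases isEmpty_or_nonempty ι
  · simp
  have hsqrt : 1 ≤ √(Fintype.card ι) := one_le_sqrt.mpr (by exact_mod_cast Fintype.card_pos)
  have hsum : ∑ i, w i ≤ Fintype.card ι := by
    simpa using sum_le_sum fun i (_ : i ∈ univ) => hw.2 i
  have hcs := sum_le_sqrt_card_mul_sqrt_sum_sq w
  have hsq := mul_self_sqrt (Nat.cast_nonneg (α := ℝ) (Fintype.card ι))
  nlinarith

theorem sum_add_mul_sqrt_card_le_of_le_neg {a : ι → ℝ} {c : ℝ} (hc : 0 ≤ c) (ha : ∀ i, a i ≤ -c)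
    {w : ι → ℝ} (hw : w ∈ Set.Icc 0 1) :
    ∑ i, a i + c * √(Fintype.card ι) ≤ ∑ i, w i * a i + c * √(∑ i, w i ^ 2) := by
  have hlin : ∑ i, c * (1 - w i) ≤ ∑ i, (w i - 1) * a i :=
    sum_le_sum fun i _ => by
      nlinarith [mul_nonneg (sub_nonneg.2 (show w i ≤ 1 from hw.2 i)) (sub_nonneg.2 (ha i))]
  rw [← mul_sum, sum_sub_distrib] at hlin
  simp only [sub_mul, one_mul, sum_sub_distrib, sum_const, card_univ, nsmul_one] at hlin
  nlinarith [mul_le_mul_of_nonneg_left (sum_sub_sqrt_sum_sq_le hw) hc]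

end

theorem easy_task_full_weight_general (n : ℕ) (ℓ : Fin n → ℝ)
    (lam γ : ℝ) (hγ : 0 < γ)
    (heasy : ∀ j, ℓ j ≤ (n : ℝ) * lam - Real.sqrt n * γ) :
    ∀ w ∈ Set.Icc (0 : Fin n → ℝ) 1,
      (1 / (n : ℝ)) * ∑ j, (1 : Fin n → ℝ) j * ℓ j - lam * ∑ j, (1 : Fin n → ℝ) j +
          (γ / Real.sqrt n) * Real.sqrt (∑ j, ((1 : Fin n → ℝ) j)^2) ≤
      (1 / (n : ℝ)) * ∑ j, w j * ℓ j - lam * ∑ j, w j +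
          (γ / Real.sqrt n) * Real.sqrt (∑ j, (w j)^2) := by
  intro w hw
  have hcoef (j : Fin n) : ℓ j / n - lam ≤ -(γ / √n) := by
    have hn : (0 : ℝ) < n := by exact_mod_cast j.pos
    have hγn : γ / √n = √n * γ / n := by
      rw [div_eq_div_iff (sqrt_pos.2 hn).ne' hn.ne']
      linear_combination (-γ) * mul_self_sqrt hn.le
    rw [sub_le_iff_le_add, hγn, div_le_iff₀ hn, add_mul, neg_mul, div_mul_cancel₀ _ hn.ne']
    linarith [heasy j]
  have key := sum_add_mul_sqrt_card_le_of_le_neg (by positivity) hcoef hw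
  have hsplit (v : Fin n → ℝ) :
      (1 / (n : ℝ)) * ∑ j, v j * ℓ j - lam * ∑ j, v j = ∑ j, v j * (ℓ j / n - lam) := by
    rw [mul_sum, mul_sum, ← sum_sub_distrib]
    exact sum_congr rfl fun j _ => by ring
  rw [hsplit, hsplit]
  simpa using key

/-- Easy task: if `ℓⱼ ≤ nλ − √n·γ` for all `j`, then `w = (1,…,1)` globally
minimizes `F(w) = (1/n) Σⱼ wⱼ ℓⱼ − λ Σⱼ wⱼ + (γ/√n) ‖w‖₂` over `[0,1]ⁿ`. -/
theorem easy_task_full_weight (n : ℕ) (hn : 1 ≤ n) (ℓ : Fin n → ℝ)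
    (lam γ : ℝ) (hlam : 0 < lam) (hγ : 0 < γ)
    (heasy : ∀ j, ℓ j ≤ (n : ℝ) * lam - Real.sqrt n * γ) :
    ∀ w ∈ Set.Icc (0 : Fin n → ℝ) 1,
      (1 / (n : ℝ)) * ∑ j, (1 : Fin n → ℝ) j * ℓ j - lam * ∑ j, (1 : Fin n → ℝ) j +
          (γ / Real.sqrt n) * Real.sqrt (∑ j, ((1 : Fin n → ℝ) j)^2) ≤
      (1 / (n : ℝ)) * ∑ j, w j * ℓ j - lam * ∑ j, w j +
          (γ / Real.sqrt n) * Real.sqrt (∑ j, (w j)^2) :=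
  easy_task_full_weight_general n ℓ lam γ hγ heasy
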